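/- arXiv:0811.3580 — 9 statements merged into one kernel-verified Lean document; each statement's English description precedes it below -/
import Mathlib

section
/- Suppose dim E ≥ 3. If the data (C,c) is pseudo-parallel with some value φ ∈ ℝ, then it is semi-parallel, i.e. P(X,Y,V,W,Z) = 0 for all X,Y,V,W,Z ∈ E. (This is the pointwise, algebraic content of the main theorem: a Lagrangian pseudo-parallel submanifold Mⁿ, n ≥ 3, of a complex space form M̃ⁿ(4c) is semi-parallel.) -/
/-!
`P(X, Y, ·, ·, ·)` is the action of the skew-adjoint endomorphism `R(X, Y)` on the symmetric
form `C`, so it is symmetric in its last two arguments, whereas the part of `Q` antisymmetric in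
them is the Kulkarni–Nomizu product `g ⊙ C(·, V, ·)`. Hence, if `φ ≠ 0`, every `C(·, V, ·)` has
`g ⊙ C(·, V, ·) = 0`; evaluating this on an orthonormal triple forces `C(·, V, ·) = 0` once
`dim E ≥ 3`. Then `Q = 0` and `P = -φ Q = 0`.
-/

open RealInnerProductSpace

section

variable {E : Type*} [NormedAddCommGroup E] [InnerProductSpace ℝ E]

theorem exists_orthonormal_fin_of_le_finrank {n : ℕ} (hn : n ≤ Module.finrank ℝ E) :
    ∃ e : Fin n → E, Orthonormal ℝ e := by
  rcases n.eq_zero_or_pos with rfl | hpos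
  · exact ⟨Fin.elim0, fun i => i.elim0, fun i => i.elim0⟩
  · have : FiniteDimensional ℝ E := Module.finite_of_finrank_pos (hpos.trans_le hn)
    exact ⟨stdOrthonormalBasis ℝ E ∘ Fin.castLE hn,
      (stdOrthonormalBasis ℝ E).orthonormal.comp _ (Fin.castLE_injective hn)⟩

/-- The Kulkarni–Nomizu product `g ⊙ B` of the inner product `g` with `B`. -/
def kulkarniNomizuInner (B : E → E → ℝ) (x y z w : E) : ℝ :=
  ⟪x, w⟫ * B y z + ⟪y, z⟫ * B x w - ⟪x, z⟫ * B y w - ⟪y, w⟫ * B x z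

theorem kulkarniNomizuInner_unit {B : E → E → ℝ} {e : E} (he : ‖e‖ = 1) (x w : E) :
    kulkarniNomizuInner B x e e w = ⟪x, w⟫ * B e e + B x w - ⟪x, e⟫ * B e w - ⟪e, w⟫ * B x e := by
  simp [kulkarniNomizuInner, he]

theorem eq_zero_of_kulkarniNomizuInner_eq_zero_of_orthonormal {B : E → E → ℝ}
    (hB : ∀ x z, B x z = B z x) (hKN : ∀ x y z w, kulkarniNomizuInner B x y z w = 0)
    {e : Fin 3 → E} (he : Orthonormal ℝ e) (x z : E) : B x z = 0 := by
  have hon := orthonormal_iff_ite.mp he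
  have hunit (i : Fin 3) : ‖e i‖ = 1 := he.1 i
  have hdiag_pair (i j : Fin 3) (hij : i ≠ j) : B (e i) (e i) + B (e j) (e j) = 0 := by
    have := hKN (e j) (e i) (e i) (e j)
    rw [kulkarniNomizuInner_unit (hunit i)] at this
    simp only [hon, if_pos, if_neg hij, if_neg hij.symm] at this
    linarith
  have h01 := hdiag_pair 0 1 (by decide)
  have h02 := hdiag_pair 0 2 (by decide)
  have h12 := hdiag_pair 1 2 (by decide)
  have hdiag : ∀ i : Fin 3, B (e i) (e i) = 0
    | 0 => by linarith
    | 1 => by linarith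
    | 2 => by linarith
  have hoff : B (e 0) (e 1) = 0 := by
    have := hKN (e 0) (e 2) (e 2) (e 1)
    rw [kulkarniNomizuInner_unit (hunit 2)] at this
    simpa [hon, hdiag] using this
  have hrow (z : E) : B (e 0) z = 0 := by
    have := hKN (e 0) (e 1) (e 1) z
    rw [kulkarniNomizuInner_unit (hunit 1)] at this
    simpa [hon, hdiag, hoff] using this
  have := hKN x (e 0) (e 0) z
  rw [kulkarniNomizuInner_unit (hunit 0), hB x (e 0)] at this
  simpa [hdiag, hrow] using this

variable (C : E →ₗ[ℝ] E →ₗ[ℝ] E →ₗ[ℝ] ℝ) {A : E → E → E}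

theorem inner_shape_apply_comm (hC : ∀ X Y Z : E, C X Y Z = C X Z Y)
    (hA : ∀ X Y Z : E, ⟪A X Y, Z⟫ = C X Y Z) (X Y Z : E) : ⟪A X Y, Z⟫ = ⟪Y, A X Z⟫ := by
  rw [hA, hC, ← hA, real_inner_comm]

theorem inner_gauss_curvature_apply_eq_neg (hA : ∀ X Y Z : E, ⟪A X Y, Z⟫ = ⟪Y, A X Z⟫)
    (c : ℝ) {R : E → E → E → E}
    (hR : ∀ X Y Z : E, R X Y Z = c • (⟪Y, Z⟫ • X - ⟪X, Z⟫ • Y) + A X (A Y Z) - A Y (A X Z))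
    (X Y U Z : E) : ⟪R X Y U, Z⟫ = -⟪U, R X Y Z⟫ := by
  simp only [hR, inner_add_left, inner_sub_left, inner_add_right, inner_sub_right,
    real_inner_smul_left, real_inner_smul_right, hA X, hA Y]
  rw [real_inner_comm U X, real_inner_comm U Y]
  ring

/-- For skew `T` the left side is `-(C (T V) W Z + C V (T W) Z + C V W (T Z))`. -/
theorem derivation_apply_symm_of_skew (hC : ∀ X Y Z : E, C X Y Z = C X Z Y)
    (hA : ∀ X Y Z : E, ⟪A X Y, Z⟫ = C X Y Z) {T : E → E} (hT : ∀ U Z : E, ⟪T U, Z⟫ = -⟪U, T Z⟫)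
    (V W Z : E) :
    ⟪T (A V W), Z⟫ - C (T V) W Z - C V (T W) Z
      = ⟪T (A V Z), W⟫ - C (T V) Z W - C V (T Z) W := by
  rw [hT, hT, hA, hA, hC V W (T Z), hC V Z (T W), hC (T V) W Z]
  ring

theorem sub_swap_eq_kulkarniNomizuInner (hC : ∀ X Y Z : E, C X Y Z = C X Z Y)
    {Q : E → E → E → E → E → ℝ}
    (hQ : ∀ X Y V W Z : E, Q X Y V W Z
      = ⟪Y, V⟫ * C X W Z - ⟪X, V⟫ * C Y W Z + ⟪Y, W⟫ * C X V Z - ⟪X, W⟫ * C Y V Z)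
    (X Y V W Z : E) :
    Q X Y V W Z - Q X Y V Z W = kulkarniNomizuInner (fun x z => C x V z) X Y W Z := by
  rw [hQ, hQ, kulkarniNomizuInner, hC X Z W, hC Y Z W]
  ring

end

theorem pseudo_parallel_implies_semi_parallel_general
    {E : Type*} [NormedAddCommGroup E] [InnerProductSpace ℝ E]
    (hdim : 3 ≤ Module.finrank ℝ E)
    (C : E →ₗ[ℝ] E →ₗ[ℝ] E →ₗ[ℝ] ℝ)
    (hC1 : ∀ X Y Z : E, C X Y Z = C Y X Z)
    (hC2 : ∀ X Y Z : E, C X Y Z = C X Z Y)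
    (A : E → E → E)
    (hA : ∀ X Y Z : E, ⟪A X Y, Z⟫ = C X Y Z)
    (c : ℝ) (R : E → E → E → E)
    (hR : ∀ X Y Z : E, R X Y Z = c • (⟪Y, Z⟫ • X - ⟪X, Z⟫ • Y) + A X (A Y Z) - A Y (A X Z))
    (P : E → E → E → E → E → ℝ)
    (hP : ∀ X Y V W Z : E, P X Y V W Z
      = ⟪R X Y (A V W), Z⟫ - C (R X Y V) W Z - C V (R X Y W) Z)
    (Q : E → E → E → E → E → ℝ)
    (hQ : ∀ X Y V W Z : E, Q X Y V W Z
      = ⟪Y, V⟫ * C X W Z - ⟪X, V⟫ * C Y W Z + ⟪Y, W⟫ * C X V Z - ⟪X, W⟫ * C Y V Z)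
    (φ : ℝ)
    (hpp : ∀ X Y V W Z : E, P X Y V W Z + φ * Q X Y V W Z = 0) :
    ∀ X Y V W Z : E, P X Y V W Z = 0 := by
  rcases eq_or_ne φ 0 with rfl | hφ
  · simpa using hpp
  have hR_skew := inner_gauss_curvature_apply_eq_neg (inner_shape_apply_comm C hC2 hA) c hR
  have hP_symm (X Y V W Z : E) : P X Y V W Z = P X Y V Z W := by
    rw [hP, hP]
    exact derivation_apply_symm_of_skew C hC2 hA (hR_skew X Y) V W Z
  have hKN (V X Y W Z : E) : kulkarniNomizuInner (fun x z => C x V z) X Y W Z = 0 := by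
    rw [← sub_swap_eq_kulkarniNomizuInner C hC2 hQ]
    have h := hpp X Y V W Z
    rw [hP_symm, ← hpp X Y V Z W, add_right_inj] at h
    exact sub_eq_zero.mpr (mul_left_cancel₀ hφ h)
  obtain ⟨e, he⟩ := exists_orthonormal_fin_of_le_finrank hdim
  have hC_zero (X V Z : E) : C X V Z = 0 :=
    eq_zero_of_kulkarniNomizuInner_eq_zero_of_orthonormal
      (fun x z => by rw [hC1, hC2, hC1]) (hKN V) he X Z
  intro X Y V W Z
  simpa [hQ, hC_zero] using hpp X Y V W Z

theorem pseudo_parallel_implies_semi_parallel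
    {E : Type*} [NormedAddCommGroup E] [InnerProductSpace ℝ E] [FiniteDimensional ℝ E]
    (hdim : 3 ≤ Module.finrank ℝ E)
    (C : E →ₗ[ℝ] E →ₗ[ℝ] E →ₗ[ℝ] ℝ)
    (hC1 : ∀ X Y Z : E, C X Y Z = C Y X Z)
    (hC2 : ∀ X Y Z : E, C X Y Z = C X Z Y)
    (A : E → E → E)
    (hA : ∀ X Y Z : E, ⟪A X Y, Z⟫ = C X Y Z)
    (c : ℝ) (R : E → E → E → E)
    (hR : ∀ X Y Z : E, R X Y Z = c • (⟪Y, Z⟫ • X - ⟪X, Z⟫ • Y) + A X (A Y Z) - A Y (A X Z))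
    (P : E → E → E → E → E → ℝ)
    (hP : ∀ X Y V W Z : E, P X Y V W Z
      = ⟪R X Y (A V W), Z⟫ - C (R X Y V) W Z - C V (R X Y W) Z)
    (Q : E → E → E → E → E → ℝ)
    (hQ : ∀ X Y V W Z : E, Q X Y V W Z
      = ⟪Y, V⟫ * C X W Z - ⟪X, V⟫ * C Y W Z + ⟪Y, W⟫ * C X V Z - ⟪X, W⟫ * C Y V Z)
    (φ : ℝ)
    (hpp : ∀ X Y V W Z : E, P X Y V W Z + φ * Q X Y V W Z = 0) :
    ∀ X Y V W Z : E, P X Y V W Z = 0 :=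
  pseudo_parallel_implies_semi_parallel_general hdim C hC1 hC2 A hA c R hR P hP Q hQ φ hpp
end

section
/- For all X,Y,V,W,Z ∈ E one has P(X,Y,V,W,Z) = P(X,Y,V,Z,W); that is, the scalar component ⟨(R̄·h)(X,Y,V,W), JZ⟩ of the derived second fundamental form is symmetric in W and Z. -/
/-!
The map `R(X,Y)` is skew-adjoint: `X ∧ Y` is, and so is the commutator `[A_X, A_Y]` of two
self-adjoint maps. Moving `R(X,Y)` across the inner product in the first term of `P` and using
the total symmetry of `C` gives
`P(X,Y,V,W,Z) = -(⟨A_V W, R(X,Y)Z⟩ + ⟨A_V Z, R(X,Y)W⟩ + ⟨A_W Z, R(X,Y)V⟩)`,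
which is visibly symmetric in `W` and `Z` because `A_W Z = A_Z W`.
-/

open RealInnerProductSpace

section SkewAdjoint

variable {E : Type*} [NormedAddCommGroup E] [InnerProductSpace ℝ E]

theorem inner_wedge_skew (X Y u v : E) :
    ⟪⟪Y, u⟫ • X - ⟪X, u⟫ • Y, v⟫ = -⟪u, ⟪Y, v⟫ • X - ⟪X, v⟫ • Y⟫ := by
  simp only [inner_sub_left, inner_sub_right, real_inner_smul_left, real_inner_smul_right,
    real_inner_comm u]
  ring

theorem inner_commutator_skew {S T : E → E} (hS : ∀ x y, ⟪S x, y⟫ = ⟪x, S y⟫)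
    (hT : ∀ x y, ⟪T x, y⟫ = ⟪x, T y⟫) (u v : E) :
    ⟪S (T u) - T (S u), v⟫ = -⟪u, S (T v) - T (S v)⟫ := by
  rw [inner_sub_left, inner_sub_right, hS, hT, hT, hS]
  ring

theorem inner_gauss_curvature_skew {A : E → E → E}
    (hA : ∀ a x y : E, ⟪A a x, y⟫ = ⟪x, A a y⟫) {c : ℝ} {R : E → E → E → E}
    (hR : ∀ X Y Z : E, R X Y Z = c • (⟪Y, Z⟫ • X - ⟪X, Z⟫ • Y) + A X (A Y Z) - A Y (A X Z))
    (X Y u v : E) : ⟪R X Y u, v⟫ = -⟪u, R X Y v⟫ := by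
  simp only [hR, add_sub_assoc, inner_add_left, inner_add_right, real_inner_smul_left,
    real_inner_smul_right, inner_wedge_skew, inner_commutator_skew (hA X) (hA Y)]
  ring

end SkewAdjoint

theorem P_symmetric_in_last_two_general
    {E : Type*} [NormedAddCommGroup E] [InnerProductSpace ℝ E]
    (C : E →ₗ[ℝ] E →ₗ[ℝ] E →ₗ[ℝ] ℝ)
    (hC1 : ∀ X Y Z : E, C X Y Z = C Y X Z)
    (hC2 : ∀ X Y Z : E, C X Y Z = C X Z Y)
    (A : E → E → E)
    (hA : ∀ X Y Z : E, ⟪A X Y, Z⟫ = C X Y Z)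
    (c : ℝ) (R : E → E → E → E)
    (hR : ∀ X Y Z : E, R X Y Z = c • (⟪Y, Z⟫ • X - ⟪X, Z⟫ • Y) + A X (A Y Z) - A Y (A X Z))
    (P : E → E → E → E → E → ℝ)
    (hP : ∀ X Y V W Z : E, P X Y V W Z
      = ⟪R X Y (A V W), Z⟫ - C (R X Y V) W Z - C V (R X Y W) Z) :
    ∀ X Y V W Z : E, P X Y V W Z = P X Y V Z W := by
  intro X Y V W Z
  have hA_symm (a b : E) : A a b = A b a := ext_inner_right ℝ fun z => by rw [hA, hA, hC1]
  have hA_self (a x y : E) : ⟪A a x, y⟫ = ⟪x, A a y⟫ := by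
    rw [hA, real_inner_comm, hA, hC2]
  have hP_skew (W Z : E) : P X Y V W Z =
      -(⟪A V W, R X Y Z⟫ + ⟪A V Z, R X Y W⟫ + ⟪A W Z, R X Y V⟫) := by
    have hCR₁ : C (R X Y V) W Z = ⟪A W Z, R X Y V⟫ := by rw [hA, hC1, hC2, hC1]
    have hCR₂ : C V (R X Y W) Z = ⟪A V Z, R X Y W⟫ := by rw [hA, hC2]
    rw [hP, hCR₁, hCR₂, inner_gauss_curvature_skew hA_self hR]
    ring
  rw [hP_skew, hP_skew, hA_symm W Z]
  ring

theorem P_symmetric_in_last_two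
    {E : Type*} [NormedAddCommGroup E] [InnerProductSpace ℝ E] [FiniteDimensional ℝ E]
    (C : E →ₗ[ℝ] E →ₗ[ℝ] E →ₗ[ℝ] ℝ)
    (hC1 : ∀ X Y Z : E, C X Y Z = C Y X Z)
    (hC2 : ∀ X Y Z : E, C X Y Z = C X Z Y)
    (A : E → E → E)
    (hA : ∀ X Y Z : E, ⟪A X Y, Z⟫ = C X Y Z)
    (c : ℝ) (R : E → E → E → E)
    (hR : ∀ X Y Z : E, R X Y Z = c • (⟪Y, Z⟫ • X - ⟪X, Z⟫ • Y) + A X (A Y Z) - A Y (A X Z))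
    (P : E → E → E → E → E → ℝ)
    (hP : ∀ X Y V W Z : E, P X Y V W Z
      = ⟪R X Y (A V W), Z⟫ - C (R X Y V) W Z - C V (R X Y W) Z) :
    ∀ X Y V W Z : E, P X Y V W Z = P X Y V Z W :=
  P_symmetric_in_last_two_general C hC1 hC2 A hA c R hR P hP
end

section
/- Suppose that for all X,Y,V,W,Z ∈ E one has ⟨Y,W⟩C(V,X,Z) − ⟨X,W⟩C(Y,V,Z) = ⟨Y,Z⟩C(V,X,W) − ⟨X,Z⟩C(Y,V,W). Then for every X ∈ E and all Y, Z ∈ E with Y ⊥ X and Z ⊥ X one has ⟨X,X⟩·C(Y,Z,X) = −⟨Y,Z⟩·C(X,X,X). -/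
open RealInnerProductSpace

section CubicForm

variable {E : Type*} [NormedAddCommGroup E] [InnerProductSpace ℝ E]
  (C : E →ₗ[ℝ] E →ₗ[ℝ] E →ₗ[ℝ] ℝ)

lemma trilinear_apply_cycle (hC1 : ∀ X Y Z : E, C X Y Z = C Y X Z)
    (hC2 : ∀ X Y Z : E, C X Y Z = C X Z Y) (X Y Z : E) :
    C X Y Z = C Y Z X := by
  rw [hC1, hC2]

-- Instance `(Y, X, X, X, Z)` of the hypothesis; orthogonality kills two of its four terms.
lemma inner_self_mul_trilinear_eq_neg_of_inner_eq_zero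
    (hsym : ∀ X Y V W Z : E,
      ⟪Y, W⟫ * C V X Z - ⟪X, W⟫ * C Y V Z = ⟪Y, Z⟫ * C V X W - ⟪X, Z⟫ * C Y V W)
    {X Y Z : E} (hY : ⟪X, Y⟫ = 0) (hZ : ⟪X, Z⟫ = 0) :
    ⟪X, X⟫ * C X Y Z = -(⟪Y, Z⟫ * C X X X) := by
  have h := hsym Y X X X Z
  rw [real_inner_comm X Y, hY, hZ] at h
  linarith

end CubicForm

theorem perp_identity_of_symmetry_general
    {E : Type*} [NormedAddCommGroup E] [InnerProductSpace ℝ E]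
    (C : E →ₗ[ℝ] E →ₗ[ℝ] E →ₗ[ℝ] ℝ)
    (hC1 : ∀ X Y Z : E, C X Y Z = C Y X Z)
    (hC2 : ∀ X Y Z : E, C X Y Z = C X Z Y)
    (hsym : ∀ X Y V W Z : E,
      ⟪Y, W⟫ * C V X Z - ⟪X, W⟫ * C Y V Z
        = ⟪Y, Z⟫ * C V X W - ⟪X, Z⟫ * C Y V W) :
    ∀ X Y Z : E, ⟪X, Y⟫ = 0 → ⟪X, Z⟫ = 0 →
      (⟪X, X⟫) * C Y Z X = -(⟪Y, Z⟫ * C X X X) := by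
  intro X Y Z hY hZ
  rw [← trilinear_apply_cycle C hC1 hC2]
  exact inner_self_mul_trilinear_eq_neg_of_inner_eq_zero C hsym hY hZ

theorem perp_identity_of_symmetry
    {E : Type*} [NormedAddCommGroup E] [InnerProductSpace ℝ E] [FiniteDimensional ℝ E]
    (C : E →ₗ[ℝ] E →ₗ[ℝ] E →ₗ[ℝ] ℝ)
    (hC1 : ∀ X Y Z : E, C X Y Z = C Y X Z)
    (hC2 : ∀ X Y Z : E, C X Y Z = C X Z Y)
    (hsym : ∀ X Y V W Z : E,
      ⟪Y, W⟫ * C V X Z - ⟪X, W⟫ * C Y V Z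
        = ⟪Y, Z⟫ * C V X W - ⟪X, Z⟫ * C Y V W) :
    ∀ X Y Z : E, ⟪X, Y⟫ = 0 → ⟪X, Z⟫ = 0 →
      (⟪X, X⟫) * C Y Z X = -(⟪Y, Z⟫ * C X X X) :=
  perp_identity_of_symmetry_general C hC1 hC2 hsym
end

section
/- Suppose that for every X ∈ E and all Y, Z ⊥ X one has ⟨X,X⟩·C(Y,Z,X) = −⟨Y,Z⟩·C(X,X,X), and suppose x ∈ E is a unit vector with C(x,x,v) = 0 for all v ⊥ x. Set λ₁ = C(x,x,x). Then C(x,y,z) = −λ₁⟨y,z⟩ for all y, z ⊥ x, and C(y,z,w) = 0 for all y, z, w ⊥ x; that is, C has the umbilical form with parameter λ₁ relative to x (equivalently h(x,x) = λ₁Jx, h(x,y) = −λ₁Jy, h(y,z) = −λ₁g(y,z)Jx for y,z ⊥ x). -/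
/-!
At `X = x` the hypothesis gives the mixed components `C(x, y, z) = -λ₁⟨y, z⟩` directly. By
polarization it then suffices to show `C(y, y, y) = 0` for `y ⊥ x`. With `n = ⟨y, y⟩` the
vectors `x + y` and `y - n x` are orthogonal, and the hypothesis at `(x + y, y - n x, y - n x)`,
expanded with the components already known, collapses to `(1 + n)² C(y, y, y) = 0`.
-/

open RealInnerProductSpace

section Polarization

variable {K M : Type*} [Field K] [AddCommGroup M] [Module K M]

theorem six_mul_apply_eq_polarization (C : M →ₗ[K] M →ₗ[K] M →ₗ[K] K)
    (hC1 : ∀ X Y Z : M, C X Y Z = C Y X Z) (hC2 : ∀ X Y Z : M, C X Y Z = C X Z Y) (y z w : M) :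
    6 * C y z w = C (y + z + w) (y + z + w) (y + z + w) - C (y + z) (y + z) (y + z)
      - C (y + w) (y + w) (y + w) - C (z + w) (z + w) (z + w)
      + C y y y + C z z z + C w w w := by
  simp only [map_add, LinearMap.add_apply]
  linear_combination 2 * hC1 y z w + 3 * hC2 y z w + 2 * hC1 y w z + hC2 z y w + hC2 w y z

theorem apply_eq_zero_of_apply_self_eq_zero [CharZero K] (C : M →ₗ[K] M →ₗ[K] M →ₗ[K] K)
    (hC1 : ∀ X Y Z : M, C X Y Z = C Y X Z) (hC2 : ∀ X Y Z : M, C X Y Z = C X Z Y)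
    {V : Submodule K M} (hV : ∀ y ∈ V, C y y y = 0) {y z w : M}
    (hy : y ∈ V) (hz : z ∈ V) (hw : w ∈ V) : C y z w = 0 := by
  have h6 := six_mul_apply_eq_polarization C hC1 hC2 y z w
  rw [hV _ (add_mem (add_mem hy hz) hw), hV _ (add_mem hy hz), hV _ (add_mem hy hw),
    hV _ (add_mem hz hw), hV y hy, hV z hz, hV w hw] at h6
  simpa using h6

end Polarization

section UmbilicalForm

variable {E : Type*} [NormedAddCommGroup E] [InnerProductSpace ℝ E]
  (C : E →ₗ[ℝ] E →ₗ[ℝ] E →ₗ[ℝ] ℝ)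

theorem apply_unit_orthogonal_eq_neg_mul_inner
    (hC1 : ∀ X Y Z : E, C X Y Z = C Y X Z) (hC2 : ∀ X Y Z : E, C X Y Z = C X Z Y)
    (hperp : ∀ X Y Z : E, ⟪X, Y⟫ = 0 → ⟪X, Z⟫ = 0 →
      (⟪X, X⟫) * C Y Z X = -(⟪Y, Z⟫ * C X X X))
    {x : E} (hx : ‖x‖ = 1) {y z : E} (hy : ⟪x, y⟫ = 0) (hz : ⟪x, z⟫ = 0) :
    C x y z = -(C x x x * ⟪y, z⟫) := by
  have h := hperp x y z hy hz
  rw [real_inner_self_eq_norm_sq, hx, one_pow, one_mul, ← hC2, ← hC1] at h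
  rw [h, mul_comm]

theorem apply_self_eq_zero_of_orthogonal
    (hC1 : ∀ X Y Z : E, C X Y Z = C Y X Z) (hC2 : ∀ X Y Z : E, C X Y Z = C X Z Y)
    (hperp : ∀ X Y Z : E, ⟪X, Y⟫ = 0 → ⟪X, Z⟫ = 0 →
      (⟪X, X⟫) * C Y Z X = -(⟪Y, Z⟫ * C X X X))
    {x : E} (hx : ‖x‖ = 1) (hxx : ∀ v : E, ⟪x, v⟫ = 0 → C x x v = 0)
    {y : E} (hy : ⟪x, y⟫ = 0) : C y y y = 0 := by
  set n : ℝ := ⟪y, y⟫ with hn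
  have hxx1 : ⟪x, x⟫ = 1 := inner_self_eq_one_of_norm_eq_one hx
  have hyx : ⟪y, x⟫ = 0 := by rw [real_inner_comm, hy]
  have hxxy : C x x y = 0 := hxx y hy
  have hxyx : C x y x = 0 := by rw [hC2, hxxy]
  have hyxx : C y x x = 0 := by rw [hC1, hxyx]
  have hxyy : C x y y = -(C x x x * n) :=
    apply_unit_orthogonal_eq_neg_mul_inner C hC1 hC2 hperp hx hy hy
  have hyxy : C y x y = -(C x x x * n) := by rw [hC1, hxyy]
  have hyyx : C y y x = -(C x x x * n) := by rw [hC2, hyxy]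
  have hXY : ⟪x + y, y - n • x⟫ = 0 := by
    simp only [inner_add_left, inner_sub_right, real_inner_smul_right, hy, hyx, hxx1]
    ring
  have h := hperp (x + y) (y - n • x) (y - n • x) hXY hXY
  simp only [map_add, map_sub, map_smul, LinearMap.add_apply, LinearMap.sub_apply,
    LinearMap.smul_apply, smul_eq_mul, inner_add_left, inner_add_right, inner_sub_left,
    inner_sub_right, real_inner_smul_left, real_inner_smul_right, hy, hyx, hxx1, ← hn,
    hxxy, hxyx, hyxx, hxyy, hyxy, hyyx] at h
  have key : (1 + n) ^ 2 * C y y y = 0 := by linear_combination h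
  have hn0 : 0 ≤ n := real_inner_self_nonneg
  exact (mul_eq_zero.mp key).resolve_left (by positivity)

end UmbilicalForm

theorem umbilical_form_of_critical_point_general
    {E : Type*} [NormedAddCommGroup E] [InnerProductSpace ℝ E]
    (C : E →ₗ[ℝ] E →ₗ[ℝ] E →ₗ[ℝ] ℝ)
    (hC1 : ∀ X Y Z : E, C X Y Z = C Y X Z)
    (hC2 : ∀ X Y Z : E, C X Y Z = C X Z Y)
    (hperp : ∀ X Y Z : E, ⟪X, Y⟫ = 0 → ⟪X, Z⟫ = 0 →
      (⟪X, X⟫) * C Y Z X = -(⟪Y, Z⟫ * C X X X))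
    (x : E) (hx : ‖x‖ = 1)
    (hxx : ∀ v : E, ⟪x, v⟫ = 0 → C x x v = 0)
    (l₁ : ℝ) (hl : l₁ = C x x x) :
    (∀ y z : E, ⟪x, y⟫ = 0 → ⟪x, z⟫ = 0 → C x y z = -l₁ * ⟪y, z⟫) ∧
    (∀ y z w : E, ⟪x, y⟫ = 0 → ⟪x, z⟫ = 0 → ⟪x, w⟫ = 0 → C y z w = 0) := by
  subst hl
  refine ⟨fun y z hy hz => ?_, fun y z w hy hz hw => ?_⟩
  · rw [apply_unit_orthogonal_eq_neg_mul_inner C hC1 hC2 hperp hx hy hz, neg_mul]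
  · have hdiag : ∀ v ∈ (ℝ ∙ x)ᗮ, C v v v = 0 := fun v hv =>
      apply_self_eq_zero_of_orthogonal C hC1 hC2 hperp hx hxx
        (Submodule.mem_orthogonal_singleton_iff_inner_right.mp hv)
    exact apply_eq_zero_of_apply_self_eq_zero C hC1 hC2 hdiag
      (Submodule.mem_orthogonal_singleton_iff_inner_right.mpr hy)
      (Submodule.mem_orthogonal_singleton_iff_inner_right.mpr hz)
      (Submodule.mem_orthogonal_singleton_iff_inner_right.mpr hw)

theorem umbilical_form_of_critical_point
    {E : Type*} [NormedAddCommGroup E] [InnerProductSpace ℝ E] [FiniteDimensional ℝ E]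
    (C : E →ₗ[ℝ] E →ₗ[ℝ] E →ₗ[ℝ] ℝ)
    (hC1 : ∀ X Y Z : E, C X Y Z = C Y X Z)
    (hC2 : ∀ X Y Z : E, C X Y Z = C X Z Y)
    (hperp : ∀ X Y Z : E, ⟪X, Y⟫ = 0 → ⟪X, Z⟫ = 0 →
      (⟪X, X⟫) * C Y Z X = -(⟪Y, Z⟫ * C X X X))
    (x : E) (hx : ‖x‖ = 1)
    (hxx : ∀ v : E, ⟪x, v⟫ = 0 → C x x v = 0)
    (l₁ : ℝ) (hl : l₁ = C x x x) :
    (∀ y z : E, ⟪x, y⟫ = 0 → ⟪x, z⟫ = 0 → C x y z = -l₁ * ⟪y, z⟫) ∧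
    (∀ y z w : E, ⟪x, y⟫ = 0 → ⟪x, z⟫ = 0 → ⟪x, w⟫ = 0 → C y z w = 0) :=
  umbilical_form_of_critical_point_general C hC1 hC2 hperp x hx hxx l₁ hl
end

section
/- Suppose that for every X ∈ E and all Y, Z ⊥ X one has ⟨X,X⟩·C(Y,Z,X) = −⟨Y,Z⟩·C(X,X,X), and suppose x ∈ E is a unit vector with A_x x = λ₁ x where λ₁ = C(x,x,x). Then A_x y = −λ₁ y for every y ∈ E with y ⊥ x. -/
open RealInnerProductSpace

/-!
The functional `z ↦ C(x, y, z) + λ₁⟪y, z⟫`, i.e. `⟪A_x y + λ₁ y, ·⟫`, vanishes at `x` because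
`C(x, y, x) = ⟪A_x x, y⟫ = λ₁⟪x, y⟫ = 0`, and on `x^⊥` by the hypothesis applied with `X = x`
(using the total symmetry of `C`). Since `ℝx ⊔ x^⊥ = E`, it vanishes identically.
-/

theorem LinearMap.eq_zero_of_apply_eq_zero_of_orthogonal
    {E F : Type*} [NormedAddCommGroup E] [InnerProductSpace ℝ E] [AddCommGroup F] [Module ℝ F]
    (f : E →ₗ[ℝ] F) {x : E} (hfx : f x = 0) (hf : ∀ w : E, ⟪x, w⟫ = 0 → f w = 0) :
    f = 0 := by
  have h : (ℝ ∙ x) ⊔ (ℝ ∙ x)ᗮ ≤ LinearMap.ker f :=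
    sup_le ((Submodule.span_singleton_le_iff_mem x _).mpr hfx) fun w hw =>
      hf w (Submodule.mem_orthogonal_singleton_iff_inner_right.mp hw)
  rwa [Submodule.sup_orthogonal_of_hasOrthogonalProjection, top_le_iff, LinearMap.ker_eq_top]
    at h

theorem shape_operator_on_orthogonal_complement_general
    {E : Type*} [NormedAddCommGroup E] [InnerProductSpace ℝ E]
    (C : E →ₗ[ℝ] E →ₗ[ℝ] E →ₗ[ℝ] ℝ)
    (hC1 : ∀ X Y Z : E, C X Y Z = C Y X Z)
    (hC2 : ∀ X Y Z : E, C X Y Z = C X Z Y)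
    (A : E → E → E)
    (hA : ∀ X Y Z : E, ⟪A X Y, Z⟫ = C X Y Z)
    (hperp : ∀ X Y Z : E, ⟪X, Y⟫ = 0 → ⟪X, Z⟫ = 0 →
      (⟪X, X⟫) * C Y Z X = -(⟪Y, Z⟫ * C X X X))
    (x : E) (hx : ‖x‖ = 1)
    (l₁ : ℝ) (hl : l₁ = C x x x)
    (hAx : A x x = l₁ • x) :
    ∀ y : E, ⟪x, y⟫ = 0 → A x y = -l₁ • y := by
  intro y hy
  have hxx : ⟪x, x⟫ = 1 := by rw [real_inner_self_eq_norm_sq, hx, one_pow]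
  have hCxyx : C x y x = 0 := by
    rw [hC2, ← hA, hAx, real_inner_smul_left, hy, mul_zero]
  have hCxyw : ∀ w : E, ⟪x, w⟫ = 0 → C x y w = -(l₁ * ⟪y, w⟫) := fun w hw => by
    have h := hperp x y w hy hw
    rwa [hxx, one_mul, ← hC2, ← hC1, ← hl, mul_comm] at h
  let f : E →ₗ[ℝ] ℝ := C x y + l₁ • (innerₛₗ ℝ y)
  have hf : f = 0 := f.eq_zero_of_apply_eq_zero_of_orthogonal (x := x)
    (by simp [f, hCxyx, real_inner_comm, hy])
    fun w hw => by simp [f, hCxyw w hw]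
  refine ext_inner_right ℝ fun z => ?_
  have hfz : C x y z + l₁ * ⟪y, z⟫ = 0 := LinearMap.congr_fun hf z
  rw [hA, real_inner_smul_left]
  linarith

theorem shape_operator_on_orthogonal_complement
    {E : Type*} [NormedAddCommGroup E] [InnerProductSpace ℝ E] [FiniteDimensional ℝ E]
    (C : E →ₗ[ℝ] E →ₗ[ℝ] E →ₗ[ℝ] ℝ)
    (hC1 : ∀ X Y Z : E, C X Y Z = C Y X Z)
    (hC2 : ∀ X Y Z : E, C X Y Z = C X Z Y)
    (A : E → E → E)
    (hA : ∀ X Y Z : E, ⟪A X Y, Z⟫ = C X Y Z)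
    (hperp : ∀ X Y Z : E, ⟪X, Y⟫ = 0 → ⟪X, Z⟫ = 0 →
      (⟪X, X⟫) * C Y Z X = -(⟪Y, Z⟫ * C X X X))
    (x : E) (hx : ‖x‖ = 1)
    (l₁ : ℝ) (hl : l₁ = C x x x)
    (hAx : A x x = l₁ • x) :
    ∀ y : E, ⟪x, y⟫ = 0 → A x y = -l₁ • y :=
  shape_operator_on_orthogonal_complement_general C hC1 hC2 A hA hperp x hx l₁ hl hAx
end

section
/- Suppose dim E ≥ 2, suppose C has the umbilical form with parameter λ₁ ≠ 0 relative to a unit vector x ∈ E, and suppose the data (C,c) is pseudo-parallel with value φ ∈ ℝ. Then 3λ₁(c − 2λ₁²) = 2φλ₁, and hence φ = (3/2)(c − 2λ₁²). -/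
/-! Take a unit vector `y ⊥ x`. The umbilical form pins down the shape operator on the plane
`span {x, y}`: `A_x x = λ x`, `A_x y = A_y x = -λ y`, `A_y y = -λ x`. Hence `R(x, y)` maps
`x ↦ (2λ² - c) y` and `y ↦ (c - 2λ²) x`, and at `(x, y, y, y, y)` the pseudo-parallelity
condition reads `3λ(c - 2λ²) + φ · (-2λ) = 0`. -/

open RealInnerProductSpace Module

section

variable {E : Type*} [NormedAddCommGroup E] [InnerProductSpace ℝ E]
  {C : E →ₗ[ℝ] E →ₗ[ℝ] E →ₗ[ℝ] ℝ} {A : E → E → E} {c : ℝ} {R : E → E → E → E}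
  {x y : E} {l : ℝ}

theorem exists_inner_eq_zero_and_norm_eq_one [FiniteDimensional ℝ E]
    (hdim : 2 ≤ finrank ℝ E) (x : E) : ∃ y : E, ⟪x, y⟫ = 0 ∧ ‖y‖ = 1 := by
  have hspan : finrank ℝ (ℝ ∙ x) ≤ 1 := by
    simpa using finrank_span_le_card (R := ℝ) ({x} : Set E)
  have : 0 < finrank ℝ (ℝ ∙ x)ᗮ := by
    have := (ℝ ∙ x).finrank_add_finrank_orthogonal
    omega
  have := Module.finrank_pos_iff.mp this
  obtain ⟨y, hy⟩ := exists_norm_eq (ℝ ∙ x)ᗮ zero_le_one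
  exact ⟨y, Submodule.mem_orthogonal_singleton_iff_inner_right.mp y.2, hy⟩

theorem eq_of_inner_eq_of_forall_orthogonal {x a b : E} (hx : ‖x‖ = 1)
    (hax : ⟪a, x⟫ = ⟪b, x⟫) (h : ∀ v, ⟪x, v⟫ = 0 → ⟪a, v⟫ = ⟪b, v⟫) : a = b := by
  refine ext_inner_right ℝ fun z => ?_
  have hz : ⟪x, z - ⟪x, z⟫ • x⟫ = 0 := by
    rw [inner_sub_right, real_inner_smul_right, inner_self_eq_one_of_norm_eq_one hx, mul_one,
      sub_self]
  calc ⟪a, z⟫ = ⟪a, ⟪x, z⟫ • x + (z - ⟪x, z⟫ • x)⟫ := by rw [add_sub_cancel]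
    _ = ⟪b, ⟪x, z⟫ • x + (z - ⟪x, z⟫ • x)⟫ := by
      rw [inner_add_right, inner_add_right, real_inner_smul_right, real_inner_smul_right, hax,
        h _ hz]
    _ = ⟪b, z⟫ := by rw [add_sub_cancel]

theorem shape_smul_right (hA : ∀ X Y Z : E, ⟪A X Y, Z⟫ = C X Y Z) (X : E) (a : ℝ) (Y : E) :
    A X (a • Y) = a • A X Y :=
  ext_inner_right ℝ fun Z => by
    rw [hA, real_inner_smul_left, hA, map_smul, LinearMap.smul_apply, smul_eq_mul]

theorem shape_comm (hA : ∀ X Y Z : E, ⟪A X Y, Z⟫ = C X Y Z)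
    (hC : ∀ X Y Z : E, C X Y Z = C Y X Z) (X Y : E) : A X Y = A Y X :=
  ext_inner_right ℝ fun Z => by rw [hA, hA, hC]

theorem umbilical_shape_self (hA : ∀ X Y Z : E, ⟪A X Y, Z⟫ = C X Y Z) (hx : ‖x‖ = 1)
    (h₁ : C x x x = l) (h₂ : ∀ v : E, ⟪x, v⟫ = 0 → C x x v = 0) :
    A x x = l • x := by
  refine eq_of_inner_eq_of_forall_orthogonal hx ?_ fun v hv => ?_
  · rw [hA, h₁, real_inner_smul_left, inner_self_eq_one_of_norm_eq_one hx, mul_one]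
  · rw [hA, h₂ v hv, real_inner_smul_left, hv, mul_zero]

theorem umbilical_shape_orthogonal (hA : ∀ X Y Z : E, ⟪A X Y, Z⟫ = C X Y Z)
    (hC : ∀ X Y Z : E, C X Y Z = C X Z Y) (hx : ‖x‖ = 1) (hxy : ⟪x, y⟫ = 0)
    (h₂ : ∀ v : E, ⟪x, v⟫ = 0 → C x x v = 0)
    (h₃ : ∀ v w : E, ⟪x, v⟫ = 0 → ⟪x, w⟫ = 0 → C x v w = -l * ⟪v, w⟫) :
    A x y = -l • y := by
  refine eq_of_inner_eq_of_forall_orthogonal hx ?_ fun v hv => ?_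
  · rw [hA, hC, h₂ y hxy, real_inner_smul_left, real_inner_comm, hxy, mul_zero]
  · rw [hA, h₃ y v hxy hv, real_inner_smul_left]

theorem umbilical_shape_orthogonal_self (hA : ∀ X Y Z : E, ⟪A X Y, Z⟫ = C X Y Z)
    (hC₁ : ∀ X Y Z : E, C X Y Z = C Y X Z) (hC₂ : ∀ X Y Z : E, C X Y Z = C X Z Y)
    (hx : ‖x‖ = 1) (hy : ‖y‖ = 1) (hxy : ⟪x, y⟫ = 0)
    (h₃ : ∀ v w : E, ⟪x, v⟫ = 0 → ⟪x, w⟫ = 0 → C x v w = -l * ⟪v, w⟫)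
    (h₄ : ∀ u v w : E, ⟪x, u⟫ = 0 → ⟪x, v⟫ = 0 → ⟪x, w⟫ = 0 → C u v w = 0) :
    A y y = -l • x := by
  refine eq_of_inner_eq_of_forall_orthogonal hx ?_ fun v hv => ?_
  · rw [hA, hC₂, hC₁, h₃ y y hxy hxy, inner_self_eq_one_of_norm_eq_one hy, real_inner_smul_left,
      inner_self_eq_one_of_norm_eq_one hx]
  · rw [hA, h₄ y y v hxy hxy hv, real_inner_smul_left, hv, mul_zero]

theorem curvature_smul_right (hA : ∀ X Y Z : E, ⟪A X Y, Z⟫ = C X Y Z)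
    (hR : ∀ X Y Z : E, R X Y Z = c • (⟪Y, Z⟫ • X - ⟪X, Z⟫ • Y) + A X (A Y Z) - A Y (A X Z))
    (X Y : E) (a : ℝ) (Z : E) : R X Y (a • Z) = a • R X Y Z := by
  simp only [hR, shape_smul_right hA, real_inner_smul_right]
  module

theorem curvature_apply_left_of_umbilical (hA : ∀ X Y Z : E, ⟪A X Y, Z⟫ = C X Y Z)
    (hR : ∀ X Y Z : E, R X Y Z = c • (⟪Y, Z⟫ • X - ⟪X, Z⟫ • Y) + A X (A Y Z) - A Y (A X Z))
    (hx : ‖x‖ = 1) (hxy : ⟪x, y⟫ = 0) (hAxx : A x x = l • x) (hAxy : A x y = -l • y)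
    (hAyx : A y x = -l • y) :
    R x y x = (2 * l ^ 2 - c) • y := by
  rw [hR, real_inner_comm, hxy, inner_self_eq_one_of_norm_eq_one hx, hAyx, hAxx,
    shape_smul_right hA, shape_smul_right hA, hAxy, hAyx]
  module

theorem curvature_apply_right_of_umbilical (hA : ∀ X Y Z : E, ⟪A X Y, Z⟫ = C X Y Z)
    (hR : ∀ X Y Z : E, R X Y Z = c • (⟪Y, Z⟫ • X - ⟪X, Z⟫ • Y) + A X (A Y Z) - A Y (A X Z))
    (hy : ‖y‖ = 1) (hxy : ⟪x, y⟫ = 0) (hAxx : A x x = l • x) (hAxy : A x y = -l • y)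
    (hAyy : A y y = -l • x) :
    R x y y = (c - 2 * l ^ 2) • x := by
  rw [hR, hxy, inner_self_eq_one_of_norm_eq_one hy, hAyy, hAxy, shape_smul_right hA,
    shape_smul_right hA, hAxx, hAyy]
  module

end

theorem phi_first_value
    {E : Type*} [NormedAddCommGroup E] [InnerProductSpace ℝ E] [FiniteDimensional ℝ E]
    (hdim : 2 ≤ Module.finrank ℝ E)
    (C : E →ₗ[ℝ] E →ₗ[ℝ] E →ₗ[ℝ] ℝ)
    (hC1 : ∀ X Y Z : E, C X Y Z = C Y X Z)
    (hC2 : ∀ X Y Z : E, C X Y Z = C X Z Y)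
    (A : E → E → E)
    (hA : ∀ X Y Z : E, ⟪A X Y, Z⟫ = C X Y Z)
    (c : ℝ) (R : E → E → E → E)
    (hR : ∀ X Y Z : E, R X Y Z = c • (⟪Y, Z⟫ • X - ⟪X, Z⟫ • Y) + A X (A Y Z) - A Y (A X Z))
    (P : E → E → E → E → E → ℝ)
    (hP : ∀ X Y V W Z : E, P X Y V W Z
      = ⟪R X Y (A V W), Z⟫ - C (R X Y V) W Z - C V (R X Y W) Z)
    (Q : E → E → E → E → E → ℝ)
    (hQ : ∀ X Y V W Z : E, Q X Y V W Z
      = ⟪Y, V⟫ * C X W Z - ⟪X, V⟫ * C Y W Z + ⟪Y, W⟫ * C X V Z - ⟪X, W⟫ * C Y V Z)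
    (φ : ℝ)
    (hpp : ∀ X Y V W Z : E, P X Y V W Z + φ * Q X Y V W Z = 0)
    (x : E) (hx : ‖x‖ = 1) (l₁ : ℝ)
    (humb1 : C x x x = l₁)
    (humb2 : ∀ v : E, ⟪x, v⟫ = 0 → C x x v = 0)
    (humb3 : ∀ v w : E, ⟪x, v⟫ = 0 → ⟪x, w⟫ = 0 → C x v w = -l₁ * ⟪v, w⟫)
    (humb4 : ∀ u v w : E, ⟪x, u⟫ = 0 → ⟪x, v⟫ = 0 → ⟪x, w⟫ = 0 → C u v w = 0)
    (hl : l₁ ≠ 0) :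
    3 * l₁ * (c - 2 * l₁ ^ 2) = 2 * φ * l₁ ∧ φ = 3 / 2 * (c - 2 * l₁ ^ 2) := by
  obtain ⟨y, hxy, hy⟩ := exists_inner_eq_zero_and_norm_eq_one hdim x
  have hAxx := umbilical_shape_self hA hx humb1 humb2
  have hAxy := umbilical_shape_orthogonal hA hC2 hx hxy humb2 humb3
  have hAyx : A y x = -l₁ • y := shape_comm hA hC1 y x ▸ hAxy
  have hAyy := umbilical_shape_orthogonal_self hA hC1 hC2 hx hy hxy humb3 humb4
  have hRx := curvature_apply_left_of_umbilical hA hR hx hxy hAxx hAxy hAyx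
  have hRy := curvature_apply_right_of_umbilical hA hR hy hxy hAxx hAxy hAyy
  have hCxyy : C x y y = -l₁ := by
    rw [humb3 y y hxy hxy, inner_self_eq_one_of_norm_eq_one hy, mul_one]
  have hCyxy : C y x y = -l₁ := by rw [← hC1, hCxyy]
  have key := hpp x y y y y
  rw [hP, hQ, hAyy, curvature_smul_right hA hR, hRx, hRy] at key
  simp only [map_smul, LinearMap.smul_apply, smul_eq_mul, real_inner_smul_left,
    inner_self_eq_one_of_norm_eq_one hy, hxy, hCxyy, hCyxy] at key
  have h : 3 * l₁ * (c - 2 * l₁ ^ 2) = 2 * φ * l₁ := by linear_combination key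
  exact ⟨h, mul_right_cancel₀ hl (by linear_combination (-1 / 2 : ℝ) * h)⟩
end

section
/- Suppose dim E ≥ 3, suppose C has the umbilical form with parameter λ₁ ≠ 0 relative to a unit vector x ∈ E, and suppose the data (C,c) is pseudo-parallel with value φ ∈ ℝ. Then φ = c − 2λ₁². -/
open RealInnerProductSpace

/-!
With `ξ = ⟪x, ·⟫`, the umbilical conditions force
`C(X,Y,Z) = λ (4 ξ(X) ξ(Y) ξ(Z) - ⟪X,Y⟫ ξ(Z) - ⟪Y,Z⟫ ξ(X) - ⟪X,Z⟫ ξ(Y))`, so `A` and `R` are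
explicit. Completing `x` to an orthonormal triple `x, y, z`, one finds `R(x,y)x = (2λ² - c) y`,
`R(x,y)y = (c - 2λ²) x` and `R(x,y)z = 0`. The pseudo-parallel identity at `(x,y,z,z,y)`, where
`Q` vanishes, gives `λ (c - 2λ²) = 0`, and at `(x,y,y,y,y)` it gives `λ (3 (c - 2λ²) - 2φ) = 0`.
As `λ ≠ 0`, both `c - 2λ²` and `φ` vanish.
-/

section

variable {E : Type*} [NormedAddCommGroup E] [InnerProductSpace ℝ E]

theorem exists_norm_eq_one_forall_inner_eq_zero_of_card_lt_finrank (s : Finset E)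
    (hs : s.card < Module.finrank ℝ E) : ∃ v : E, ‖v‖ = 1 ∧ ∀ u ∈ s, ⟪u, v⟫ = 0 := by
  have : FiniteDimensional ℝ E := Module.finite_of_finrank_pos (by omega)
  have hK : (Submodule.span ℝ (s : Set E))ᗮ ≠ ⊥ := by
    rw [Ne, Submodule.orthogonal_eq_bot_iff]
    exact (span_lt_top_of_card_lt_finrank (by simpa using hs)).ne
  obtain ⟨w, hw, hw0⟩ := Submodule.exists_mem_ne_zero_of_ne_bot hK
  refine ⟨‖w‖⁻¹ • w, norm_smul_inv_norm hw0, fun u hu => ?_⟩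
  rw [real_inner_smul_right, hw u (Submodule.subset_span hu), mul_zero]

theorem exists_orthonormal_pair_orthogonal (hdim : 3 ≤ Module.finrank ℝ E) (x : E) :
    ∃ y z : E, ‖y‖ = 1 ∧ ‖z‖ = 1 ∧ ⟪x, y⟫ = 0 ∧ ⟪x, z⟫ = 0 ∧ ⟪y, z⟫ = 0 := by
  classical
  obtain ⟨y, hy, hxy⟩ :=
    exists_norm_eq_one_forall_inner_eq_zero_of_card_lt_finrank {x} (by simp; omega)
  obtain ⟨z, hz, hz'⟩ := exists_norm_eq_one_forall_inner_eq_zero_of_card_lt_finrank {x, y}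
    (Finset.card_le_two.trans_lt (by omega))
  exact ⟨y, z, hy, hz, hxy x (by simp), hz' x (by simp), hz' y (by simp)⟩

theorem exists_eq_smul_add_of_inner_self_eq_one {x : E} (hx : ⟪x, x⟫ = 1) (V : E) :
    ∃ (a : ℝ) (V' : E), ⟪x, V'⟫ = 0 ∧ V = a • x + V' :=
  ⟨⟪x, V⟫, V - ⟪x, V⟫ • x, by rw [inner_sub_right, real_inner_smul_right, hx, mul_one, sub_self],
    by abel⟩

def umbilicalCubic (x : E) (l : ℝ) (X Y Z : E) : ℝ :=
  l * (4 * ⟪x, X⟫ * ⟪x, Y⟫ * ⟪x, Z⟫ - ⟪X, Y⟫ * ⟪x, Z⟫ - ⟪Y, Z⟫ * ⟪x, X⟫ - ⟪X, Z⟫ * ⟪x, Y⟫)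

def umbilicalShape (x : E) (l : ℝ) (X Y : E) : E :=
  l • ((4 * ⟪x, X⟫ * ⟪x, Y⟫ - ⟪X, Y⟫) • x - ⟪x, X⟫ • Y - ⟪x, Y⟫ • X)

def gaussCurvature (c : ℝ) (A : E → E → E) (X Y Z : E) : E :=
  c • (⟪Y, Z⟫ • X - ⟪X, Z⟫ • Y) + A X (A Y Z) - A Y (A X Z)

theorem eq_umbilicalCubic (C : E →ₗ[ℝ] E →ₗ[ℝ] E →ₗ[ℝ] ℝ)
    (hC1 : ∀ X Y Z : E, C X Y Z = C Y X Z) (hC2 : ∀ X Y Z : E, C X Y Z = C X Z Y)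
    {x : E} (hx : ‖x‖ = 1) {l : ℝ} (h₁ : C x x x = l)
    (h₂ : ∀ v : E, ⟪x, v⟫ = 0 → C x x v = 0)
    (h₃ : ∀ v w : E, ⟪x, v⟫ = 0 → ⟪x, w⟫ = 0 → C x v w = -l * ⟪v, w⟫)
    (h₄ : ∀ u v w : E, ⟪x, u⟫ = 0 → ⟪x, v⟫ = 0 → ⟪x, w⟫ = 0 → C u v w = 0)
    (X Y Z : E) : C X Y Z = umbilicalCubic x l X Y Z := by
  have hxx : ⟪x, x⟫ = 1 := by rw [real_inner_self_eq_norm_sq, hx, one_pow]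
  obtain ⟨a, X, hX, rfl⟩ := exists_eq_smul_add_of_inner_self_eq_one hxx X
  obtain ⟨b, Y, hY, rfl⟩ := exists_eq_smul_add_of_inner_self_eq_one hxx Y
  obtain ⟨c, Z, hZ, rfl⟩ := exists_eq_smul_add_of_inner_self_eq_one hxx Z
  have hxYx : C x Y x = 0 := by rw [hC2, h₂ Y hY]
  have hXxx : C X x x = 0 := by rw [hC1, hC2, h₂ X hX]
  have hXxZ : C X x Z = -l * ⟪X, Z⟫ := by rw [hC1, h₃ X Z hX hZ]
  have hXYx : C X Y x = -l * ⟪X, Y⟫ := by rw [hC2, hC1, h₃ X Y hX hY]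
  simp only [map_add, map_smul, LinearMap.add_apply, LinearMap.smul_apply, smul_eq_mul,
    h₁, h₂ Z hZ, hxYx, h₃ Y Z hY hZ, hXxx, hXxZ, hXYx, h₄ X Y Z hX hY hZ]
  simp only [umbilicalCubic, inner_add_left, inner_add_right, real_inner_smul_left,
    real_inner_smul_right, hxx, hX, hY, hZ, real_inner_comm x]
  ring

theorem inner_umbilicalShape (x : E) (l : ℝ) (X Y Z : E) :
    ⟪umbilicalShape x l X Y, Z⟫ = umbilicalCubic x l X Y Z := by
  simp only [umbilicalShape, umbilicalCubic, real_inner_smul_left, inner_sub_left]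
  ring

theorem umbilicalShape_smul_right (x : E) (l : ℝ) (X Y : E) (a : ℝ) :
    umbilicalShape x l X (a • Y) = a • umbilicalShape x l X Y := by
  simp only [umbilicalShape, real_inner_smul_right]
  module

theorem gaussCurvature_smul_right {c : ℝ} {A : E → E → E}
    (hA : ∀ (X Y : E) (a : ℝ), A X (a • Y) = a • A X Y) (X Y Z : E) (a : ℝ) :
    gaussCurvature c A X Y (a • Z) = a • gaussCurvature c A X Y Z := by
  simp only [gaussCurvature, hA, real_inner_smul_right]
  module

section OrthonormalFrame

variable {x y z : E} {l c : ℝ}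

theorem umbilicalShape_self_of_inner_eq_zero (hxy : ⟪x, y⟫ = 0) (hyy : ⟪y, y⟫ = 1) :
    umbilicalShape x l y y = -l • x := by
  simp only [umbilicalShape, hxy, hyy]
  module

theorem gaussCurvature_umbilicalShape_left (hxx : ⟪x, x⟫ = 1) (hxy : ⟪x, y⟫ = 0) :
    gaussCurvature c (umbilicalShape x l) x y x = (2 * l ^ 2 - c) • y := by
  simp only [gaussCurvature, umbilicalShape, inner_sub_right, real_inner_smul_right,
    real_inner_comm x y, hxx, hxy]
  module

theorem gaussCurvature_umbilicalShape_right (hxx : ⟪x, x⟫ = 1) (hxy : ⟪x, y⟫ = 0)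
    (hyy : ⟪y, y⟫ = 1) : gaussCurvature c (umbilicalShape x l) x y y = (c - 2 * l ^ 2) • x := by
  simp only [gaussCurvature, umbilicalShape, inner_sub_right, real_inner_smul_right,
    real_inner_comm x y, hxx, hxy, hyy]
  module

theorem gaussCurvature_umbilicalShape_of_orthogonal (hxy : ⟪x, y⟫ = 0) (hxz : ⟪x, z⟫ = 0)
    (hyz : ⟪y, z⟫ = 0) : gaussCurvature c (umbilicalShape x l) x y z = 0 := by
  simp only [gaussCurvature, umbilicalShape, inner_sub_right, real_inner_smul_right,
    real_inner_comm x y, hxz, hxy, hyz]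
  module

end OrthonormalFrame

end

theorem phi_second_value_general
    {E : Type*} [NormedAddCommGroup E] [InnerProductSpace ℝ E]
    (hdim : 3 ≤ Module.finrank ℝ E)
    (C : E →ₗ[ℝ] E →ₗ[ℝ] E →ₗ[ℝ] ℝ)
    (hC1 : ∀ X Y Z : E, C X Y Z = C Y X Z)
    (hC2 : ∀ X Y Z : E, C X Y Z = C X Z Y)
    (A : E → E → E)
    (hA : ∀ X Y Z : E, ⟪A X Y, Z⟫ = C X Y Z)
    (c : ℝ) (R : E → E → E → E)
    (hR : ∀ X Y Z : E, R X Y Z = c • (⟪Y, Z⟫ • X - ⟪X, Z⟫ • Y) + A X (A Y Z) - A Y (A X Z))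
    (P : E → E → E → E → E → ℝ)
    (hP : ∀ X Y V W Z : E, P X Y V W Z
      = ⟪R X Y (A V W), Z⟫ - C (R X Y V) W Z - C V (R X Y W) Z)
    (Q : E → E → E → E → E → ℝ)
    (hQ : ∀ X Y V W Z : E, Q X Y V W Z
      = ⟪Y, V⟫ * C X W Z - ⟪X, V⟫ * C Y W Z + ⟪Y, W⟫ * C X V Z - ⟪X, W⟫ * C Y V Z)
    (φ : ℝ)
    (hpp : ∀ X Y V W Z : E, P X Y V W Z + φ * Q X Y V W Z = 0)
    (x : E) (hx : ‖x‖ = 1) (l₁ : ℝ)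
    (humb1 : C x x x = l₁)
    (humb2 : ∀ v : E, ⟪x, v⟫ = 0 → C x x v = 0)
    (humb3 : ∀ v w : E, ⟪x, v⟫ = 0 → ⟪x, w⟫ = 0 → C x v w = -l₁ * ⟪v, w⟫)
    (humb4 : ∀ u v w : E, ⟪x, u⟫ = 0 → ⟪x, v⟫ = 0 → ⟪x, w⟫ = 0 → C u v w = 0)
    (hl : l₁ ≠ 0) :
    φ = c - 2 * l₁ ^ 2 := by
  obtain ⟨y, z, hy, hz, hxy, hxz, hyz⟩ := exists_orthonormal_pair_orthogonal hdim x
  have hxx : ⟪x, x⟫ = 1 := by rw [real_inner_self_eq_norm_sq, hx, one_pow]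
  have hyy : ⟪y, y⟫ = 1 := by rw [real_inner_self_eq_norm_sq, hy, one_pow]
  have hzz : ⟪z, z⟫ = 1 := by rw [real_inner_self_eq_norm_sq, hz, one_pow]
  have hC := eq_umbilicalCubic C hC1 hC2 hx humb1 humb2 humb3 humb4
  obtain rfl : A = umbilicalShape x l₁ :=
    funext₂ fun X Y => ext_inner_right ℝ fun Z => by rw [hA, hC, inner_umbilicalShape]
  obtain rfl : R = gaussCurvature c (umbilicalShape x l₁) := by
    funext X Y Z; exact hR X Y Z
  have hRsmul := gaussCurvature_smul_right (c := c) (umbilicalShape_smul_right x l₁) x y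
  have hcurv : l₁ * (c - 2 * l₁ ^ 2) = 0 := by
    have h := hpp x y z z y
    rw [hP, hQ, umbilicalShape_self_of_inner_eq_zero hxz hzz, hRsmul,
      gaussCurvature_umbilicalShape_left hxx hxy,
      gaussCurvature_umbilicalShape_of_orthogonal hxy hxz hyz] at h
    simp only [hC, umbilicalCubic, real_inner_smul_left, hyy, hxz, hyz, inner_zero_left,
      inner_zero_right] at h
    linear_combination h
  have hφ : l₁ * (3 * (c - 2 * l₁ ^ 2) - 2 * φ) = 0 := by
    have h := hpp x y y y y
    rw [hP, hQ, umbilicalShape_self_of_inner_eq_zero hxy hyy, hRsmul,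
      gaussCurvature_umbilicalShape_left hxx hxy,
      gaussCurvature_umbilicalShape_right hxx hxy hyy] at h
    simp only [hC, umbilicalCubic, real_inner_smul_left, real_inner_smul_right, hxx, hyy, hxy,
      real_inner_comm x y] at h
    linear_combination h
  have hc : c - 2 * l₁ ^ 2 = 0 := (mul_eq_zero.mp hcurv).resolve_left hl
  have hφ₀ := (mul_eq_zero.mp hφ).resolve_left hl
  linarith

theorem phi_second_value
    {E : Type*} [NormedAddCommGroup E] [InnerProductSpace ℝ E] [FiniteDimensional ℝ E]
    (hdim : 3 ≤ Module.finrank ℝ E)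
    (C : E →ₗ[ℝ] E →ₗ[ℝ] E →ₗ[ℝ] ℝ)
    (hC1 : ∀ X Y Z : E, C X Y Z = C Y X Z)
    (hC2 : ∀ X Y Z : E, C X Y Z = C X Z Y)
    (A : E → E → E)
    (hA : ∀ X Y Z : E, ⟪A X Y, Z⟫ = C X Y Z)
    (c : ℝ) (R : E → E → E → E)
    (hR : ∀ X Y Z : E, R X Y Z = c • (⟪Y, Z⟫ • X - ⟪X, Z⟫ • Y) + A X (A Y Z) - A Y (A X Z))
    (P : E → E → E → E → E → ℝ)
    (hP : ∀ X Y V W Z : E, P X Y V W Z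
      = ⟪R X Y (A V W), Z⟫ - C (R X Y V) W Z - C V (R X Y W) Z)
    (Q : E → E → E → E → E → ℝ)
    (hQ : ∀ X Y V W Z : E, Q X Y V W Z
      = ⟪Y, V⟫ * C X W Z - ⟪X, V⟫ * C Y W Z + ⟪Y, W⟫ * C X V Z - ⟪X, W⟫ * C Y V Z)
    (φ : ℝ)
    (hpp : ∀ X Y V W Z : E, P X Y V W Z + φ * Q X Y V W Z = 0)
    (x : E) (hx : ‖x‖ = 1) (l₁ : ℝ)
    (humb1 : C x x x = l₁)
    (humb2 : ∀ v : E, ⟪x, v⟫ = 0 → C x x v = 0)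
    (humb3 : ∀ v w : E, ⟪x, v⟫ = 0 → ⟪x, w⟫ = 0 → C x v w = -l₁ * ⟪v, w⟫)
    (humb4 : ∀ u v w : E, ⟪x, u⟫ = 0 → ⟪x, v⟫ = 0 → ⟪x, w⟫ = 0 → C u v w = 0)
    (hl : l₁ ≠ 0) :
    φ = c - 2 * l₁ ^ 2 :=
  phi_second_value_general hdim C hC1 hC2 A hA c R hR P hP Q hQ φ hpp x hx l₁ humb1 humb2 humb3
    humb4 hl
end

section
/- Suppose dim E ≥ 3, suppose C has the umbilical form with parameter λ₁ ≠ 0 relative to a unit vector x ∈ E, and suppose the data (C,c) is pseudo-parallel with value φ ∈ ℝ. Then φ = 0 and c = 2λ₁². -/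
open RealInnerProductSpace

/-!
The umbilical form makes every shape operator explicit: `A x` is `λ` on `x` and `-λ` on `x⊥`,
while `A v x = -λ v` and `A v w = -λ ⟪v, w⟫ x` for `v, w ⊥ x`. Hence, for an orthonormal pair
`y, z ⊥ x` (this is where `dim E ≥ 3` enters), the Gauss equation gives `R(x,y)y = κ x`,
`R(x,y)x = -κ y` and `R(x,y)z = 0` with `κ = c - 2λ²`. Pseudo-parallelity evaluated at
`(x, y, y, y, y)` and `(x, y, y, z, z)` then reads `3λκ - 2λφ = 0` and `λκ - λφ = 0`,
and since `λ ≠ 0` this forces `κ = φ = 0`.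
-/

section Orthonormal

variable {F : Type*} [NormedAddCommGroup F] [InnerProductSpace ℝ F] [FiniteDimensional ℝ F]

theorem exists_orthonormal_pair_of_two_le_finrank (h : 2 ≤ Module.finrank ℝ F) :
    ∃ u v : F, ⟪u, u⟫ = 1 ∧ ⟪v, v⟫ = 1 ∧ ⟪u, v⟫ = 0 := by
  have hb := orthonormal_iff_ite.mp (stdOrthonormalBasis ℝ F).orthonormal
  exact ⟨_, _, hb ⟨0, by omega⟩ ⟨0, by omega⟩, hb ⟨1, by omega⟩ ⟨1, by omega⟩,
    hb ⟨0, by omega⟩ ⟨1, by omega⟩⟩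

theorem exists_orthonormal_pair_orthogonal_of_three_le_finrank
    (hdim : 3 ≤ Module.finrank ℝ F) (x : F) :
    ∃ y z : F, ⟪x, y⟫ = 0 ∧ ⟪x, z⟫ = 0 ∧ ⟪y, y⟫ = 1 ∧ ⟪z, z⟫ = 1 ∧ ⟪y, z⟫ = 0 := by
  have hK : 2 ≤ Module.finrank ℝ (ℝ ∙ x)ᗮ := by
    have := Submodule.finrank_add_finrank_orthogonal (ℝ ∙ x)
    have := finrank_span_le_card (R := ℝ) ({x} : Set F)
    simp only [Set.toFinset_singleton, Finset.card_singleton] at this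
    omega
  obtain ⟨u, v, huu, hvv, huv⟩ := exists_orthonormal_pair_of_two_le_finrank hK
  have hperp (w : (ℝ ∙ x)ᗮ) : ⟪x, (w : F)⟫ = 0 :=
    Submodule.inner_right_of_mem_orthogonal (Submodule.mem_span_singleton_self x) w.2
  exact ⟨u, v, hperp u, hperp v, huu, hvv, huv⟩

end Orthonormal

section Umbilical

variable {E : Type*} [NormedAddCommGroup E] [InnerProductSpace ℝ E]

theorem exists_eq_smul_add_of_norm_eq_one {x : E} (hx : ‖x‖ = 1) (Z : E) :
    ∃ (a : ℝ) (v : E), ⟪x, v⟫ = 0 ∧ Z = a • x + v := by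
  refine ⟨⟪x, Z⟫, Z - ⟪x, Z⟫ • x, ?_, by abel⟩
  rw [inner_sub_right, real_inner_smul_right, real_inner_self_eq_norm_sq, hx]
  ring

structure IsUmbilicalCubicForm (C : E →ₗ[ℝ] E →ₗ[ℝ] E →ₗ[ℝ] ℝ) (x : E) (l : ℝ) : Prop where
  norm_eq_one : ‖x‖ = 1
  apply_self_self_self : C x x x = l
  apply_self_self_perp : ∀ v : E, ⟪x, v⟫ = 0 → C x x v = 0
  apply_self_perp_perp : ∀ v w : E, ⟪x, v⟫ = 0 → ⟪x, w⟫ = 0 → C x v w = -l * ⟪v, w⟫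
  apply_perp_perp_perp : ∀ u v w : E, ⟪x, u⟫ = 0 → ⟪x, v⟫ = 0 → ⟪x, w⟫ = 0 → C u v w = 0

def IsShapeOperator (C : E →ₗ[ℝ] E →ₗ[ℝ] E →ₗ[ℝ] ℝ) (A : E → E → E) : Prop :=
  ∀ X Y Z : E, ⟪A X Y, Z⟫ = C X Y Z

def IsGaussCurvature (c : ℝ) (A : E → E → E) (R : E → E → E → E) : Prop :=
  ∀ X Y Z : E, R X Y Z = c • (⟪Y, Z⟫ • X - ⟪X, Z⟫ • Y) + A X (A Y Z) - A Y (A X Z)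

/-- The component `⟪(R̄ · h)(X, Y, V, W), J Z⟫` of the derived second fundamental form. -/
def derivedCubicForm (C : E →ₗ[ℝ] E →ₗ[ℝ] E →ₗ[ℝ] ℝ) (A : E → E → E) (R : E → E → E → E)
    (X Y V W Z : E) : ℝ :=
  ⟪R X Y (A V W), Z⟫ - C (R X Y V) W Z - C V (R X Y W) Z

/-- The component `⟪Q(g, h)(X, Y, V, W), J Z⟫` of the Tachibana tensor. -/
def tachibanaCubicForm (C : E →ₗ[ℝ] E →ₗ[ℝ] E →ₗ[ℝ] ℝ) (X Y V W Z : E) : ℝ :=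
  ⟪Y, V⟫ * C X W Z - ⟪X, V⟫ * C Y W Z + ⟪Y, W⟫ * C X V Z - ⟪X, W⟫ * C Y V Z

variable {C : E →ₗ[ℝ] E →ₗ[ℝ] E →ₗ[ℝ] ℝ} {A : E → E → E} {c : ℝ} {R : E → E → E → E}
  {x v w y : E} {l : ℝ}

theorem IsShapeOperator.apply_smul (hA : IsShapeOperator C A) (X : E) (a : ℝ) (Y : E) :
    A X (a • Y) = a • A X Y :=
  ext_inner_right ℝ fun Z => by
    rw [hA, real_inner_smul_left, hA, map_smul, LinearMap.smul_apply, smul_eq_mul]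

theorem IsGaussCurvature.apply_smul (hA : IsShapeOperator C A) (hR : IsGaussCurvature c A R)
    (X Y : E) (a : ℝ) (Z : E) : R X Y (a • Z) = a • R X Y Z := by
  simp only [hR X Y, hA.apply_smul, real_inner_smul_right]
  module

namespace IsUmbilicalCubicForm

theorem inner_self_eq_one (hU : IsUmbilicalCubicForm C x l) : ⟪x, x⟫ = 1 := by
  rw [real_inner_self_eq_norm_sq, hU.norm_eq_one, one_pow]

theorem apply_self_self (hU : IsUmbilicalCubicForm C x l) (Z : E) :
    C x x Z = l * ⟪x, Z⟫ := by
  obtain ⟨a, v, hv, rfl⟩ := exists_eq_smul_add_of_norm_eq_one hU.norm_eq_one Z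
  rw [map_add, map_smul, smul_eq_mul, hU.apply_self_self_self, hU.apply_self_self_perp v hv,
    inner_add_right, real_inner_smul_right, hU.inner_self_eq_one, hv]
  ring

theorem apply_self_perp (hU : IsUmbilicalCubicForm C x l)
    (hC2 : ∀ X Y Z : E, C X Y Z = C X Z Y) (hv : ⟪x, v⟫ = 0) (Z : E) :
    C x v Z = -l * ⟪v, Z⟫ := by
  obtain ⟨a, w, hw, rfl⟩ := exists_eq_smul_add_of_norm_eq_one hU.norm_eq_one Z
  rw [map_add, map_smul, smul_eq_mul, hC2 x v x, hU.apply_self_self_perp v hv,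
    hU.apply_self_perp_perp v w hv hw, inner_add_right, real_inner_smul_right,
    real_inner_comm x v, hv]
  ring

theorem apply_perp_perp (hU : IsUmbilicalCubicForm C x l)
    (hC1 : ∀ X Y Z : E, C X Y Z = C Y X Z) (hC2 : ∀ X Y Z : E, C X Y Z = C X Z Y)
    (hv : ⟪x, v⟫ = 0) (hw : ⟪x, w⟫ = 0) (Z : E) :
    C v w Z = -l * ⟪v, w⟫ * ⟪x, Z⟫ := by
  obtain ⟨a, u, hu, rfl⟩ := exists_eq_smul_add_of_norm_eq_one hU.norm_eq_one Z
  rw [map_add, map_smul, smul_eq_mul, hC2, hC1, hU.apply_self_perp_perp v w hv hw,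
    hU.apply_perp_perp_perp v w u hv hw hu, inner_add_right, real_inner_smul_right,
    hU.inner_self_eq_one, hu]
  ring

theorem shape_self_self (hU : IsUmbilicalCubicForm C x l) (hA : IsShapeOperator C A) :
    A x x = l • x :=
  ext_inner_right ℝ fun Z => by rw [hA, hU.apply_self_self, real_inner_smul_left]

theorem shape_self_perp (hU : IsUmbilicalCubicForm C x l)
    (hC2 : ∀ X Y Z : E, C X Y Z = C X Z Y) (hA : IsShapeOperator C A) (hv : ⟪x, v⟫ = 0) :
    A x v = -l • v :=
  ext_inner_right ℝ fun Z => by rw [hA, hU.apply_self_perp hC2 hv, real_inner_smul_left]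

theorem shape_perp_self (hU : IsUmbilicalCubicForm C x l)
    (hC1 : ∀ X Y Z : E, C X Y Z = C Y X Z) (hC2 : ∀ X Y Z : E, C X Y Z = C X Z Y)
    (hA : IsShapeOperator C A) (hv : ⟪x, v⟫ = 0) :
    A v x = -l • v :=
  ext_inner_right ℝ fun Z => by rw [hA, hC1, hU.apply_self_perp hC2 hv, real_inner_smul_left]

theorem shape_perp_perp (hU : IsUmbilicalCubicForm C x l)
    (hC1 : ∀ X Y Z : E, C X Y Z = C Y X Z) (hC2 : ∀ X Y Z : E, C X Y Z = C X Z Y)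
    (hA : IsShapeOperator C A) (hv : ⟪x, v⟫ = 0) (hw : ⟪x, w⟫ = 0) :
    A v w = (-l * ⟪v, w⟫) • x :=
  ext_inner_right ℝ fun Z => by
    rw [hA, hU.apply_perp_perp hC1 hC2 hv hw, real_inner_smul_left]

theorem curvature_self_perp_perp (hU : IsUmbilicalCubicForm C x l)
    (hC1 : ∀ X Y Z : E, C X Y Z = C Y X Z) (hC2 : ∀ X Y Z : E, C X Y Z = C X Z Y)
    (hA : IsShapeOperator C A) (hR : IsGaussCurvature c A R)
    (hy : ⟪x, y⟫ = 0) (hyy : ⟪y, y⟫ = 1) :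
    R x y y = (c - 2 * l ^ 2) • x := by
  rw [hR, hU.shape_perp_perp hC1 hC2 hA hy hy, hU.shape_self_perp hC2 hA hy, hA.apply_smul,
    hA.apply_smul, hU.shape_self_self hA, hU.shape_perp_perp hC1 hC2 hA hy hy, hy, hyy]
  module

theorem curvature_self_perp_self (hU : IsUmbilicalCubicForm C x l)
    (hC1 : ∀ X Y Z : E, C X Y Z = C Y X Z) (hC2 : ∀ X Y Z : E, C X Y Z = C X Z Y)
    (hA : IsShapeOperator C A) (hR : IsGaussCurvature c A R) (hy : ⟪x, y⟫ = 0) :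
    R x y x = -(c - 2 * l ^ 2) • y := by
  rw [hR, hU.shape_perp_self hC1 hC2 hA hy, hU.shape_self_self hA, hA.apply_smul,
    hA.apply_smul, hU.shape_self_perp hC2 hA hy, hU.shape_perp_self hC1 hC2 hA hy,
    real_inner_comm, hy, hU.inner_self_eq_one]
  module

theorem curvature_self_perp_of_orthogonal (hU : IsUmbilicalCubicForm C x l)
    (hC1 : ∀ X Y Z : E, C X Y Z = C Y X Z) (hC2 : ∀ X Y Z : E, C X Y Z = C X Z Y)
    (hA : IsShapeOperator C A) (hR : IsGaussCurvature c A R)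
    (hy : ⟪x, y⟫ = 0) (hw : ⟪x, w⟫ = 0) (hyw : ⟪y, w⟫ = 0) :
    R x y w = 0 := by
  rw [hR, hU.shape_perp_perp hC1 hC2 hA hy hw, hU.shape_self_perp hC2 hA hw, hA.apply_smul,
    hA.apply_smul, hU.shape_perp_perp hC1 hC2 hA hy hw, hyw, hw]
  module

theorem derivedCubicForm_unit_perp (hU : IsUmbilicalCubicForm C x l)
    (hC1 : ∀ X Y Z : E, C X Y Z = C Y X Z) (hC2 : ∀ X Y Z : E, C X Y Z = C X Z Y)
    (hA : IsShapeOperator C A) (hR : IsGaussCurvature c A R)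
    (hy : ⟪x, y⟫ = 0) (hyy : ⟪y, y⟫ = 1) :
    derivedCubicForm C A R x y y y y = 3 * l * (c - 2 * l ^ 2) := by
  have hxyy : C x y y = -l := by rw [hU.apply_self_perp hC2 hy, hyy, mul_one]
  rw [derivedCubicForm, hU.shape_perp_perp hC1 hC2 hA hy hy, hR.apply_smul hA,
    hU.curvature_self_perp_self hC1 hC2 hA hR hy, hU.curvature_self_perp_perp hC1 hC2 hA hR hy hyy]
  simp only [map_smul, LinearMap.smul_apply, smul_eq_mul, real_inner_smul_left, hC1 y x y, hxyy,
    hyy]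
  ring

theorem tachibanaCubicForm_unit_perp (hU : IsUmbilicalCubicForm C x l)
    (hC2 : ∀ X Y Z : E, C X Y Z = C X Z Y) (hy : ⟪x, y⟫ = 0) (hyy : ⟪y, y⟫ = 1) :
    tachibanaCubicForm C x y y y y = -2 * l := by
  rw [tachibanaCubicForm, hU.apply_self_perp hC2 hy, hy, hyy]
  ring

theorem derivedCubicForm_orthonormal_perp (hU : IsUmbilicalCubicForm C x l)
    (hC1 : ∀ X Y Z : E, C X Y Z = C Y X Z) (hC2 : ∀ X Y Z : E, C X Y Z = C X Z Y)
    (hA : IsShapeOperator C A) (hR : IsGaussCurvature c A R)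
    (hy : ⟪x, y⟫ = 0) (hw : ⟪x, w⟫ = 0) (hyy : ⟪y, y⟫ = 1) (hww : ⟪w, w⟫ = 1)
    (hyw : ⟪y, w⟫ = 0) :
    derivedCubicForm C A R x y y w w = l * (c - 2 * l ^ 2) := by
  rw [derivedCubicForm, hU.shape_perp_perp hC1 hC2 hA hy hw, hyw, hR.apply_smul hA,
    hU.curvature_self_perp_self hC1 hC2 hA hR hy, hU.curvature_self_perp_perp hC1 hC2 hA hR hy hyy,
    hU.curvature_self_perp_of_orthogonal hC1 hC2 hA hR hy hw hyw, map_smul, LinearMap.smul_apply,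
    LinearMap.smul_apply, hU.apply_self_perp hC2 hw, hww]
  simp only [real_inner_smul_left, hyw, map_zero, LinearMap.zero_apply, smul_eq_mul]
  ring

theorem tachibanaCubicForm_orthonormal_perp (hU : IsUmbilicalCubicForm C x l)
    (hC2 : ∀ X Y Z : E, C X Y Z = C X Z Y) (hy : ⟪x, y⟫ = 0) (hw : ⟪x, w⟫ = 0)
    (hyy : ⟪y, y⟫ = 1) (hww : ⟪w, w⟫ = 1) (hyw : ⟪y, w⟫ = 0) :
    tachibanaCubicForm C x y y w w = -l := by
  rw [tachibanaCubicForm, hU.apply_self_perp hC2 hw, hy, hw, hyy, hww, hyw]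
  ring

end IsUmbilicalCubicForm

end Umbilical

theorem phi_vanishes
    {E : Type*} [NormedAddCommGroup E] [InnerProductSpace ℝ E] [FiniteDimensional ℝ E]
    (hdim : 3 ≤ Module.finrank ℝ E)
    (C : E →ₗ[ℝ] E →ₗ[ℝ] E →ₗ[ℝ] ℝ)
    (hC1 : ∀ X Y Z : E, C X Y Z = C Y X Z)
    (hC2 : ∀ X Y Z : E, C X Y Z = C X Z Y)
    (A : E → E → E)
    (hA : ∀ X Y Z : E, ⟪A X Y, Z⟫ = C X Y Z)
    (c : ℝ) (R : E → E → E → E)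
    (hR : ∀ X Y Z : E, R X Y Z = c • (⟪Y, Z⟫ • X - ⟪X, Z⟫ • Y) + A X (A Y Z) - A Y (A X Z))
    (P : E → E → E → E → E → ℝ)
    (hP : ∀ X Y V W Z : E, P X Y V W Z
      = ⟪R X Y (A V W), Z⟫ - C (R X Y V) W Z - C V (R X Y W) Z)
    (Q : E → E → E → E → E → ℝ)
    (hQ : ∀ X Y V W Z : E, Q X Y V W Z
      = ⟪Y, V⟫ * C X W Z - ⟪X, V⟫ * C Y W Z + ⟪Y, W⟫ * C X V Z - ⟪X, W⟫ * C Y V Z)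
    (φ : ℝ)
    (hpp : ∀ X Y V W Z : E, P X Y V W Z + φ * Q X Y V W Z = 0)
    (x : E) (hx : ‖x‖ = 1) (l₁ : ℝ)
    (humb1 : C x x x = l₁)
    (humb2 : ∀ v : E, ⟪x, v⟫ = 0 → C x x v = 0)
    (humb3 : ∀ v w : E, ⟪x, v⟫ = 0 → ⟪x, w⟫ = 0 → C x v w = -l₁ * ⟪v, w⟫)
    (humb4 : ∀ u v w : E, ⟪x, u⟫ = 0 → ⟪x, v⟫ = 0 → ⟪x, w⟫ = 0 → C u v w = 0)
    (hl : l₁ ≠ 0) :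
    φ = 0 ∧ c = 2 * l₁ ^ 2 := by
  have hU : IsUmbilicalCubicForm C x l₁ := ⟨hx, humb1, humb2, humb3, humb4⟩
  have hP' : P = derivedCubicForm C A R := by funext X Y V W Z; exact hP X Y V W Z
  have hQ' : Q = tachibanaCubicForm C := by funext X Y V W Z; exact hQ X Y V W Z
  obtain ⟨y, z, hy, hz, hyy, hzz, hyz⟩ :=
    exists_orthonormal_pair_orthogonal_of_three_le_finrank hdim x
  have e₁ := hpp x y y y y
  rw [hP', hQ', hU.derivedCubicForm_unit_perp hC1 hC2 hA hR hy hyy,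
    hU.tachibanaCubicForm_unit_perp hC2 hy hyy] at e₁
  have e₂ := hpp x y y z z
  rw [hP', hQ', hU.derivedCubicForm_orthonormal_perp hC1 hC2 hA hR hy hz hyy hzz hyz,
    hU.tachibanaCubicForm_orthonormal_perp hC2 hy hz hyy hzz hyz] at e₂
  have hφ : l₁ * φ = 0 := by linear_combination e₁ - 3 * e₂
  have hc : l₁ * (c - 2 * l₁ ^ 2) = 0 := by linear_combination e₁ - 2 * e₂
  exact ⟨(mul_eq_zero.mp hφ).resolve_left hl,
    sub_eq_zero.mp ((mul_eq_zero.mp hc).resolve_left hl)⟩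
end

section
/- Suppose that for every X ∈ E and all Y, Z ⊥ X one has ⟨X,X⟩·C(Y,Z,X) = −⟨Y,Z⟩·C(X,X,X), and suppose x ∈ E is a unit vector with C(x,x,v) = 0 for all v ⊥ x. Then C(y,y,y) = 0 for every y ∈ E with y ⊥ x, and consequently (by total symmetry and polarization) C(y,z,w) = 0 for all y, z, w ∈ E perpendicular to x. -/
/-! The hypothesis with `X = y ⊥ x` and `Y = Z = x` reads `C(y,y,y) = -⟪y,y⟫ C(x,x,y) = 0`.
Polarization of the symmetric form `C` then spreads the vanishing of the cubic to all of `xᗮ`. -/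

open RealInnerProductSpace

namespace LinearMap

variable {R M : Type*} [Field R] [CharZero R] [AddCommGroup M] [Module R M]
  {C : M →ₗ[R] M →ₗ[R] M →ₗ[R] R}

variable (hC1 : ∀ X Y Z : M, C X Y Z = C Y X Z) (hC2 : ∀ X Y Z : M, C X Y Z = C X Z Y)
  {p : Submodule R M} (hcube : ∀ y ∈ p, C y y y = 0)
include hC1 hC2 hcube

-- Expanding the cubes of `a + b` and `a - b` gives `±3 C(a,a,b) + 3 C(a,b,b) = 0`.
theorem apply_self_self_eq_zero_of_cube_eq_zero {a b : M} (ha : a ∈ p) (hb : b ∈ p) :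
    C a a b = 0 := by
  have hplus := hcube (a + b) (p.add_mem ha hb)
  have hminus := hcube (a - b) (p.sub_mem ha hb)
  simp only [map_add, map_sub, add_apply, sub_apply] at hplus hminus
  have h6 : (6 : R) * C a a b = 0 := by
    linear_combination hplus - hminus - 2 * hcube b hb - 2 * hC1 b a a + 4 * hC2 a a b
  simpa using h6

theorem eq_zero_of_cube_eq_zero {y z w : M} (hy : y ∈ p) (hz : z ∈ p) (hw : w ∈ p) :
    C y z w = 0 := by
  have hsum := apply_self_self_eq_zero_of_cube_eq_zero hC1 hC2 hcube (p.add_mem hy hz) hw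
  simp only [map_add, add_apply] at hsum
  have h2 : (2 : R) * C y z w = 0 := by
    linear_combination hsum - apply_self_self_eq_zero_of_cube_eq_zero hC1 hC2 hcube hy hw
      - apply_self_self_eq_zero_of_cube_eq_zero hC1 hC2 hcube hz hw - hC1 z y w
  simpa using h2

end LinearMap

theorem cubic_vanishes_on_orthogonal_complement_general
    {E : Type*} [NormedAddCommGroup E] [InnerProductSpace ℝ E]
    (C : E →ₗ[ℝ] E →ₗ[ℝ] E →ₗ[ℝ] ℝ)
    (hC1 : ∀ X Y Z : E, C X Y Z = C Y X Z)
    (hC2 : ∀ X Y Z : E, C X Y Z = C X Z Y)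
    (hperp : ∀ X Y Z : E, ⟪X, Y⟫ = 0 → ⟪X, Z⟫ = 0 →
      (⟪X, X⟫) * C Y Z X = -(⟪Y, Z⟫ * C X X X))
    (x : E) (hx : ‖x‖ = 1)
    (hxx : ∀ v : E, ⟪x, v⟫ = 0 → C x x v = 0) :
    (∀ y : E, ⟪x, y⟫ = 0 → C y y y = 0) ∧
    (∀ y z w : E, ⟪x, y⟫ = 0 → ⟪x, z⟫ = 0 → ⟪x, w⟫ = 0 → C y z w = 0) := by
  have hcube : ∀ y : E, ⟪x, y⟫ = 0 → C y y y = 0 := by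
    intro y hy
    have hyx : ⟪y, x⟫ = 0 := by rwa [real_inner_comm]
    have h := hperp y x x hyx hyx
    have hunit : ⟪x, x⟫ = 1 := by rw [real_inner_self_eq_norm_sq, hx, one_pow]
    rwa [hxx y hy, hunit, mul_zero, one_mul, zero_eq_neg] at h
  simp only [← Submodule.mem_orthogonal_singleton_iff_inner_right (𝕜 := ℝ)] at hcube ⊢
  exact ⟨hcube, fun y z w => LinearMap.eq_zero_of_cube_eq_zero hC1 hC2 hcube⟩

theorem cubic_vanishes_on_orthogonal_complement
    {E : Type*} [NormedAddCommGroup E] [InnerProductSpace ℝ E] [FiniteDimensional ℝ E]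
    (C : E →ₗ[ℝ] E →ₗ[ℝ] E →ₗ[ℝ] ℝ)
    (hC1 : ∀ X Y Z : E, C X Y Z = C Y X Z)
    (hC2 : ∀ X Y Z : E, C X Y Z = C X Z Y)
    (hperp : ∀ X Y Z : E, ⟪X, Y⟫ = 0 → ⟪X, Z⟫ = 0 →
      (⟪X, X⟫) * C Y Z X = -(⟪Y, Z⟫ * C X X X))
    (x : E) (hx : ‖x‖ = 1)
    (hxx : ∀ v : E, ⟪x, v⟫ = 0 → C x x v = 0) :
    (∀ y : E, ⟪x, y⟫ = 0 → C y y y = 0) ∧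
    (∀ y z w : E, ⟪x, y⟫ = 0 → ⟪x, z⟫ = 0 → ⟪x, w⟫ = 0 → C y z w = 0) :=
  cubic_vanishes_on_orthogonal_complement_general C hC1 hC2 hperp x hx hxx
end
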